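/- Let S be a family of triangles of a finite simple graph with |S| ≥ 2 such that any two distinct members t, t' of S satisfy |E(t) ∩ E(t')| = 1. Then one of the following holds: either all members of S share a common edge (the intersection of all their edge sets is a single edge), or |S| ≤ 4 and the union of the vertex sets of the members of S consists of exactly 4 vertices that are pairwise adjacent (inducing a K₄). -/
import Mathlib


open Finset

/-- The edge set of a triangle `t` (a set of vertices): all unordered pairs of
distinct vertices of `t`. -/
def triEdges {V : Type*} [DecidableEq V] (t : Finset V) : Finset (Sym2 V) :=
  t.sym2.filter (fun e => ¬ e.IsDiag)

lemma mem_triEdges {V : Type*} [DecidableEq V] {t : Finset V} {x y : V} :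
    s(x,y) ∈ triEdges t ↔ x ∈ t ∧ y ∈ t ∧ x ≠ y := by
  simp [triEdges, Finset.mk_mem_sym2_iff]; tauto

/-- `P` is a collection of pairwise edge-disjoint triangles of `G`. -/
def IsTrianglePacking {V : Type*} [DecidableEq V] (G : SimpleGraph V)
    (P : Finset (Finset V)) : Prop :=
  (∀ t ∈ P, G.IsNClique 3 t) ∧
    ∀ t₁ ∈ P, ∀ t₂ ∈ P, t₁ ≠ t₂ → Disjoint (triEdges t₁) (triEdges t₂)

/-- The triangle packing number `ν(G)`: the maximum number of pairwise
edge-disjoint triangles in `G`. -/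
noncomputable def packingNumber {V : Type*} [DecidableEq V] (G : SimpleGraph V) : ℕ :=
  sSup {n | ∃ P : Finset (Finset V), IsTrianglePacking G P ∧ P.card = n}

/-- A family of triangles pairwise sharing exactly one edge either has a common
edge or consists of at most four triangles whose vertices induce a `K₄`. -/
theorem pairwise_intersecting_triangles {V : Type*} [Fintype V] [DecidableEq V]
    (G : SimpleGraph V) (S : Finset (Finset V))
    (hS : ∀ t ∈ S, G.IsNClique 3 t) (hcard : 2 ≤ S.card)
    (hint : ∀ t ∈ S, ∀ t' ∈ S, t ≠ t' → (triEdges t ∩ triEdges t').card = 1) :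
    (∃ e : Sym2 V, (∀ t ∈ S, e ∈ triEdges t) ∧
      ∀ e' : Sym2 V, (∀ t ∈ S, e' ∈ triEdges t) → e' = e) ∨
    (S.card ≤ 4 ∧ (S.biUnion id).card = 4 ∧
      ∀ u ∈ S.biUnion id, ∀ v ∈ S.biUnion id, u ≠ v → G.Adj u v) := by
  -- two distinct triangles
  obtain ⟨t1, h1, t2, h2, hne12⟩ := Finset.one_lt_card.mp hcard
  have hc3 : ∀ t ∈ S, t.card = 3 := fun t ht => (hS t ht).2
  -- pairwise vertex intersections have card 2
  have key : ∀ t ∈ S, ∀ t' ∈ S, t ≠ t' → (t ∩ t').card = 2 := by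
    intro t ht t' ht' hne
    have h1 := hint t ht t' ht' hne
    obtain ⟨e, he⟩ := Finset.card_pos.mp (by omega : 0 < (triEdges t ∩ triEdges t').card)
    induction e using Sym2.ind with
    | _ x y =>
      rw [Finset.mem_inter, mem_triEdges, mem_triEdges] at he
      obtain ⟨⟨hxt, hyt, hxy⟩, hxt', hyt', -⟩ := he
      have h2 : 2 ≤ (t ∩ t').card := by
        have hsub : ({x, y} : Finset V) ⊆ t ∩ t' := by
          intro z hz
          rw [Finset.mem_insert, Finset.mem_singleton] at hz
          rcases hz with rfl | rfl <;> simp [Finset.mem_inter, *]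
        calc 2 = ({x, y} : Finset V).card := (Finset.card_pair hxy).symm
        _ ≤ _ := Finset.card_le_card hsub
      have h3 : (t ∩ t').card ≤ 3 :=
        le_trans (Finset.card_le_card Finset.inter_subset_left) (hc3 t ht).le
      have h4 : (t ∩ t').card ≠ 3 := by
        intro h
        have e1 : t ∩ t' = t := Finset.eq_of_subset_of_card_le Finset.inter_subset_left
          (by rw [h, hc3 t ht])
        have e2 : t ∩ t' = t' := Finset.eq_of_subset_of_card_le Finset.inter_subset_right
          (by rw [h, hc3 t' ht'])
        exact hne (e1.symm.trans e2)
      omega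
  by_cases hcom : ∀ t ∈ S, t1 ∩ t2 ⊆ t
  · -- common edge case
    left
    have hE := hint t1 h1 t2 h2 hne12
    obtain ⟨e, he⟩ := Finset.card_pos.mp (by omega : 0 < (triEdges t1 ∩ triEdges t2).card)
    refine ⟨e, ?_, ?_⟩
    · intro t ht
      induction e using Sym2.ind with
      | _ x y =>
        rw [Finset.mem_inter, mem_triEdges, mem_triEdges] at he
        obtain ⟨⟨hxt, hyt, hxy⟩, hxt', hyt', -⟩ := he
        rw [mem_triEdges]
        exact ⟨hcom t ht (Finset.mem_inter.mpr ⟨hxt, hxt'⟩),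
          hcom t ht (Finset.mem_inter.mpr ⟨hyt, hyt'⟩), hxy⟩
    · intro e' he'
      exact Finset.card_le_one.mp hE.le e'
        (Finset.mem_inter.mpr ⟨he' t1 h1, he' t2 h2⟩) e he
  · -- K4 case
    right
    push_neg at hcom
    obtain ⟨t3, h3, hnsub⟩ := hcom
    have hne13 : t1 ≠ t3 := by rintro rfl; exact hnsub Finset.inter_subset_left
    have hne23 : t2 ≠ t3 := by rintro rfl; exact hnsub Finset.inter_subset_right
    set A := t1 ∩ t2 with hA
    set B := t1 ∩ t3 with hB
    have hcA : A.card = 2 := key t1 h1 t2 h2 hne12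
    have hcB : B.card = 2 := key t1 h1 t3 h3 hne13
    have hAB : A ≠ B := fun h => hnsub (h ▸ Finset.inter_subset_right)
    -- find a ∈ A ∩ B
    have hABsub : A ∪ B ⊆ t1 := Finset.union_subset Finset.inter_subset_left
      Finset.inter_subset_left
    have hcAB : 1 ≤ (A ∩ B).card := by
      have e1 := Finset.card_inter_add_card_union A B
      have e2 := Finset.card_le_card hABsub
      have e3 := hc3 t1 h1
      have e4 := Finset.card_union_le A B
      omega
    obtain ⟨a, ha⟩ := Finset.card_pos.mp (by omega : 0 < (A ∩ B).card)
    rw [Finset.mem_inter] at ha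
    obtain ⟨haA, haB⟩ := ha
    -- b : second element of A
    obtain ⟨b, hb⟩ := Finset.card_pos.mp
      (by rw [Finset.card_erase_of_mem haA, hcA]; norm_num : 0 < (A.erase a).card)
    rw [Finset.mem_erase] at hb
    obtain ⟨hba, hbA⟩ := hb
    have hAeq : A = {a, b} := by
      refine (Finset.eq_of_subset_of_card_le ?_ ?_).symm
      · intro z hz; rw [Finset.mem_insert, Finset.mem_singleton] at hz
        rcases hz with rfl | rfl <;> assumption
      · rw [hcA, Finset.card_pair (Ne.symm hba)]
    -- c : second element of B
    obtain ⟨c, hc⟩ := Finset.card_pos.mp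
      (by rw [Finset.card_erase_of_mem haB, hcB]; norm_num : 0 < (B.erase a).card)
    rw [Finset.mem_erase] at hc
    obtain ⟨hca, hcB'⟩ := hc
    have hBeq : B = {a, c} := by
      refine (Finset.eq_of_subset_of_card_le ?_ ?_).symm
      · intro z hz; rw [Finset.mem_insert, Finset.mem_singleton] at hz
        rcases hz with rfl | rfl <;> assumption
      · rw [hcB, Finset.card_pair (Ne.symm hca)]
    have hbc : b ≠ c := by
      rintro rfl; exact hAB (hAeq.trans hBeq.symm)
    -- memberships
    have ha1 : a ∈ t1 := (Finset.mem_inter.mp haA).1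
    have ha2 : a ∈ t2 := (Finset.mem_inter.mp haA).2
    have ha3 : a ∈ t3 := (Finset.mem_inter.mp haB).2
    have hb1 : b ∈ t1 := (Finset.mem_inter.mp hbA).1
    have hb2 : b ∈ t2 := (Finset.mem_inter.mp hbA).2
    have hc1 : c ∈ t1 := (Finset.mem_inter.mp hcB').1
    have hc3' : c ∈ t3 := (Finset.mem_inter.mp hcB').2
    have hac : a ≠ c := Ne.symm hca
    have hab : a ≠ b := Ne.symm hba
    have ht1eq : t1 = {a, b, c} := by
      refine (Finset.eq_of_subset_of_card_le ?_ ?_).symm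
      · intro z hz
        simp only [Finset.mem_insert, Finset.mem_singleton] at hz
        rcases hz with rfl | rfl | rfl <;> assumption
      · rw [hc3 t1 h1]
        rw [Finset.card_insert_of_notMem (by simp [hab, hac]),
          Finset.card_pair hbc]
    -- c ∉ t2
    have hct2 : c ∉ t2 := by
      intro h
      have : c ∈ A := Finset.mem_inter.mpr ⟨hc1, h⟩
      rw [hAeq] at this
      simp only [Finset.mem_insert, Finset.mem_singleton] at this
      rcases this with rfl | rfl
      · exact hac rfl
      · exact hbc rfl
    -- d : element of t2 not in t1
    have hd' : (t2 \ t1).Nonempty := by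
      rw [Finset.sdiff_nonempty]
      intro h
      exact hne12 (Finset.eq_of_subset_of_card_le h (by rw [hc3 t1 h1, hc3 t2 h2])).symm
    obtain ⟨d, hd⟩ := hd'
    rw [Finset.mem_sdiff] at hd
    obtain ⟨hd2, hdt1⟩ := hd
    have hda : d ≠ a := fun h => hdt1 (h ▸ ha1)
    have hdb : d ≠ b := fun h => hdt1 (h ▸ hb1)
    have hdc : d ≠ c := fun h => hdt1 (h ▸ hc1)
    have ht2eq : t2 = {a, b, d} := by
      refine (Finset.eq_of_subset_of_card_le ?_ ?_).symm
      · intro z hz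
        simp only [Finset.mem_insert, Finset.mem_singleton] at hz
        rcases hz with rfl | rfl | rfl <;> assumption
      · rw [hc3 t2 h2]
        rw [Finset.card_insert_of_notMem (by simp [hab, hda.symm]),
          Finset.card_pair (Ne.symm hdb)]
    -- third element of t3
    obtain ⟨w, hw⟩ := Finset.card_pos.mp
      (by
        have hBt3 : B ⊆ t3 := Finset.inter_subset_right
        have := Finset.card_sdiff_of_subset hBt3
        rw [hcB, hc3 t3 h3] at this
        omega : 0 < (t3 \ B).card)
    rw [Finset.mem_sdiff] at hw
    obtain ⟨hw3, hwB⟩ := hw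
    have hwa : w ≠ a := fun h => hwB (h ▸ (hBeq ▸ (by simp : a ∈ ({a,c} : Finset V))))
    have hwc : w ≠ c := fun h => hwB (h ▸ (hBeq ▸ (by simp : c ∈ ({a,c} : Finset V))))
    have ht3eq : t3 = {a, c, w} := by
      refine (Finset.eq_of_subset_of_card_le ?_ ?_).symm
      · intro z hz
        simp only [Finset.mem_insert, Finset.mem_singleton] at hz
        rcases hz with rfl | rfl | rfl <;> assumption
      · rw [hc3 t3 h3]
        rw [Finset.card_insert_of_notMem (by simp [hac, hwa.symm]),
          Finset.card_pair (Ne.symm hwc)]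
    -- show w = d via t2 ∩ t3
    have hcC : (t2 ∩ t3).card = 2 := key t2 h2 t3 h3 hne23
    have haC : a ∈ t2 ∩ t3 := Finset.mem_inter.mpr ⟨ha2, ha3⟩
    obtain ⟨z, hz⟩ := Finset.card_pos.mp
      (by rw [Finset.card_erase_of_mem haC, hcC]; norm_num : 0 < ((t2 ∩ t3).erase a).card)
    rw [Finset.mem_erase, Finset.mem_inter] at hz
    obtain ⟨hza, hz2, hz3⟩ := hz
    have hwd : w = d := by
      rw [ht2eq] at hz2; rw [ht3eq] at hz3
      simp only [Finset.mem_insert, Finset.mem_singleton] at hz2 hz3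
      rcases hz2 with rfl | rfl | rfl
      · exact absurd rfl hza
      · -- z = b; b ∈ {a, c, w} so b = w (b ≠ a, b ≠ c); then t3 = t1, contra
        rcases hz3 with rfl | rfl | h
        · exact absurd rfl hab.symm
        · exact absurd rfl hbc
        · exfalso
          apply hne13
          rw [ht1eq, ht3eq, ← h]
          ext y; simp; tauto
      · rcases hz3 with rfl | rfl | h
        · exact absurd rfl hda
        · exact absurd rfl hdc
        · exact h.symm
    rw [hwd] at ht3eq
    -- the K4 vertex set
    obtain ⟨K, hK⟩ : ∃ K : Finset V, K = {a, b, c, d} := ⟨_, rfl⟩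
    have hcK : K.card = 4 := by
      rw [hK]
      rw [Finset.card_insert_of_notMem (by simp [hab, hac, hda.symm]),
        Finset.card_insert_of_notMem (by simp [hbc, hdb.symm]),
        Finset.card_pair (Ne.symm hdc)]
    have h1K : t1 ⊆ K := by rw [ht1eq, hK]; intro z hz; simp only [Finset.mem_insert, Finset.mem_singleton] at hz ⊢; tauto
    have h2K : t2 ⊆ K := by rw [ht2eq, hK]; intro z hz; simp only [Finset.mem_insert, Finset.mem_singleton] at hz ⊢; tauto
    have h3K : t3 ⊆ K := by
      rw [ht3eq, hK]
      intro z hz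
      simp only [Finset.mem_insert, Finset.mem_singleton] at hz ⊢
      rcases hz with rfl | rfl | rfl
      · left; rfl
      · right; right; left; rfl
      · right; right; right; rfl
    -- every triangle in S is inside K
    have hsubK : ∀ t ∈ S, t ⊆ K := by
      intro t ht
      by_cases e1 : t = t1; · rw [e1]; exact h1K
      by_cases e2 : t = t2; · rw [e2]; exact h2K
      by_cases e3 : t = t3; · rw [e3]; exact h3K
      by_contra hcon
      obtain ⟨x, hxt, hxK⟩ := Finset.not_subset.mp hcon
      have hx1 : x ∉ t1 := fun h => hxK (h1K h)
      have hx2 : x ∉ t2 := fun h => hxK (h2K h)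
      have hx3 : x ∉ t3 := fun h => hxK (h3K h)
      have hcer : (t.erase x).card = 2 := by
        rw [Finset.card_erase_of_mem hxt, hc3 t ht]
      have hstep : ∀ t' ∈ S, t ≠ t' → x ∉ t' → t.erase x ⊆ t' := by
        intro t' ht' hne' hxt'
        have hsub : t ∩ t' ⊆ t.erase x := by
          intro z hz
          rw [Finset.mem_inter] at hz
          rw [Finset.mem_erase]
          exact ⟨fun h => hxt' (h ▸ hz.2), hz.1⟩
        have heq : t ∩ t' = t.erase x := Finset.eq_of_subset_of_card_le hsub
          (by rw [hcer, key t ht t' ht' hne'])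
        rw [← heq]; exact Finset.inter_subset_right
      have hs1 := hstep t1 h1 e1 hx1
      have hs2 := hstep t2 h2 e2 hx2
      have hs3 := hstep t3 h3 e3 hx3
      have : t.erase x ⊆ {a} := by
        intro z hz
        have hz1 := hs1 hz; have hz2 := hs2 hz; have hz3 := hs3 hz
        rw [ht1eq] at hz1; rw [ht2eq] at hz2; rw [ht3eq] at hz3
        simp only [Finset.mem_insert, Finset.mem_singleton] at hz1 hz2 hz3 ⊢
        rcases hz1 with rfl | rfl | rfl
        · rfl
        · rcases hz3 with h | h | h
          · exact absurd h hab.symm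
          · exact absurd h hbc
          · exact absurd h hdb.symm
        · rcases hz2 with h | h | h
          · exact absurd h hac.symm
          · exact absurd h hbc.symm
          · exact absurd h hdc.symm
      have := Finset.card_le_card this
      simp [hcer] at this
    -- biUnion = K
    have hbU : S.biUnion id = K := by
      apply Finset.Subset.antisymm
      · intro z hz
        rw [Finset.mem_biUnion] at hz
        obtain ⟨t, ht, hzt⟩ := hz
        exact hsubK t ht hzt
      · intro z hz
        rw [hK] at hz
        simp only [Finset.mem_insert, Finset.mem_singleton] at hz
        rw [Finset.mem_biUnion]
        rcases hz with rfl | rfl | rfl | rfl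
        · exact ⟨t1, h1, ha1⟩
        · exact ⟨t1, h1, hb1⟩
        · exact ⟨t1, h1, hc1⟩
        · exact ⟨t2, h2, hd2⟩
    refine ⟨?_, by rw [hbU]; exact hcK, ?_⟩
    · -- |S| ≤ 4
      have : S ⊆ K.powersetCard 3 := by
        intro t ht
        rw [Finset.mem_powersetCard]
        exact ⟨hsubK t ht, hc3 t ht⟩
      calc S.card ≤ (K.powersetCard 3).card := Finset.card_le_card this
        _ = 4 := by rw [Finset.card_powersetCard, hcK]; rfl
    · -- adjacency
      have adj : ∀ t ∈ S, ∀ u ∈ t, ∀ v ∈ t, u ≠ v → G.Adj u v := by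
        intro t ht u hu v hv huv
        exact (hS t ht).1 hu hv huv
      have hd3 : d ∈ t3 := by rw [ht3eq]; simp
      have Hab := adj t1 h1 a ha1 b hb1 hab
      have Hac := adj t1 h1 a ha1 c hc1 hac
      have Hbc := adj t1 h1 b hb1 c hc1 hbc
      have Had := adj t2 h2 a ha2 d hd2 (Ne.symm hda)
      have Hbd := adj t2 h2 b hb2 d hd2 (Ne.symm hdb)
      have Hcd := adj t3 h3 c hc3' d hd3 (Ne.symm hdc)
      intro u hu v hv huv
      rw [hbU, hK] at hu hv
      simp only [Finset.mem_insert, Finset.mem_singleton] at hu hv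
      rcases hu with rfl | rfl | rfl | rfl <;> rcases hv with rfl | rfl | rfl | rfl <;>
        first
          | exact absurd rfl huv
          | assumption
          | exact Hab.symm
          | exact Hac.symm
          | exact Hbc.symm
          | exact Had.symm
          | exact Hbd.symm
          | exact Hcd.symm
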